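/- arXiv:2411.10320 — 2 statements merged into one kernel-verified Lean document; each statement's English description precedes it below -/
import Mathlib

section
/- At the critical parameter value ρ = ρ* = (33√33 − 115)/668, the point x₋ = (9 − √33)/24 is a fixed point of f_{ρ*}, i.e. f_{ρ*}(x₋) = x₋, and moreover f_{ρ*}′(x₋) = 1; that is, x₋ is a degenerate (saddle-node) fixed point of the map at ρ = ρ*. -/
/-- The one-parameter family of polynomial maps `f_ρ`. -/
noncomputable def fmap (ρ x : ℝ) : ℝ :=
  (ρ - 1) * (8 * x ^ 3 - 9 * x ^ 2) + 2 * ρ * x - x + ρ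

/-- The critical parameter value of the saddle-node bifurcation. -/
noncomputable def ρstar : ℝ := (33 * Real.sqrt 33 - 115) / 668

/-- The bifurcation point in state space. -/
noncomputable def xminus : ℝ := (9 - Real.sqrt 33) / 24

/-! Writing `f_ρ(x) - x = (ρ - 1) p(x) + ρ` with `p(x) = 8x³ - 9x² + 2x`, we get
`f_ρ'(x) = 1 + (ρ - 1) p'(x)`, and `x₋` is a root of `p'(x) / 2 = 12x² - 9x + 1`; so `f_ρ'(x₋) = 1`
for every `ρ`. Reducing `p(x₋)` modulo that quadratic leaves a linear equation in `ρ` for the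
fixed point, whose solution is `ρ*`. -/

theorem hasDerivAt_fmap (ρ x : ℝ) :
    HasDerivAt (fmap ρ) (1 + (ρ - 1) * (24 * x ^ 2 - 18 * x + 2)) x := by
  have h := ((((((hasDerivAt_pow 3 x).const_mul 8).sub
      ((hasDerivAt_pow 2 x).const_mul 9)).const_mul (ρ - 1)).add
      ((hasDerivAt_id x).const_mul (2 * ρ))).sub (hasDerivAt_id x)).add_const ρ
  refine h.congr_deriv ?_
  push_cast
  ring

theorem deriv_fmap (ρ x : ℝ) :
    deriv (fmap ρ) x = 1 + (ρ - 1) * (24 * x ^ 2 - 18 * x + 2) :=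
  (hasDerivAt_fmap ρ x).deriv

theorem xminus_quadratic : 12 * xminus ^ 2 - 9 * xminus + 1 = 0 := by
  have hs : Real.sqrt 33 ^ 2 = 33 := Real.sq_sqrt (by norm_num)
  unfold xminus
  linear_combination hs / 48

theorem deriv_fmap_xminus (ρ : ℝ) : deriv (fmap ρ) xminus = 1 := by
  rw [deriv_fmap]
  linear_combination 2 * (ρ - 1) * xminus_quadratic

theorem fmap_xminus (ρ : ℝ) :
    fmap ρ xminus = xminus + (ρ * (15 - 11 * xminus) - (3 - 11 * xminus)) / 12 := by
  unfold fmap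
  linear_combination (ρ - 1) * (8 * xminus - 3) / 12 * xminus_quadratic

theorem ρstar_mul : ρstar * (15 - 11 * xminus) = 3 - 11 * xminus := by
  have hs : Real.sqrt 33 ^ 2 = 33 := Real.sq_sqrt (by norm_num)
  unfold ρstar xminus
  linear_combination 363 / 16032 * hs

/-- At `ρ = ρ* = (33√33 - 115)/668`, the point `x₋ = (9 - √33)/24` is a fixed point of `f_{ρ*}`
with `f_{ρ*}'(x₋) = 1`, i.e. a degenerate (saddle-node) fixed point. -/
theorem stmt_6 : fmap ρstar xminus = xminus ∧ deriv (fmap ρstar) xminus = 1 := by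
  refine ⟨?_, deriv_fmap_xminus ρstar⟩
  rw [fmap_xminus, ρstar_mul, sub_self, zero_div, add_zero]
end

section
/- For every ρ ∈ ℝ, the residual at the ghost point satisfies the exact affine identity f_ρ(x₋) − x₋ = ((261 + 11√33)/288) · (ρ − ρ*), where the slope (261 + 11√33)/288 is positive. Consequently, for ρ ≥ ρ*, the ghost cost value J_ρ(x₋) = (f_ρ(x₋) − x₋)/√2 increases linearly in ρ and vanishes exactly at ρ = ρ*. -/
lemma key : ∀ ρ : ℝ, fmap ρ xminus - xminus
    = ((261 + 11 * Real.sqrt 33) / 288) * (ρ - ρstar) := by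
  intro ρ
  have hs : Real.sqrt 33 ^ 2 = 33 := Real.sq_sqrt (by norm_num)
  unfold fmap xminus ρstar
  linear_combination (121 / 64128 + (1 - ρ) / 1728 * Real.sqrt 33) * hs

lemma slope_pos : 0 < (261 + 11 * Real.sqrt 33) / 288 := by
  positivity

/-- The residual at the ghost point satisfies the exact affine identity
`f_ρ(x₋) - x₋ = ((261 + 11√33)/288)·(ρ - ρ*)` with positive slope; consequently, for `ρ ≥ ρ*`
the ghost cost value `J_ρ(x₋) = (f_ρ(x₋) - x₋)/√2` increases (strictly monotonically, linearly)
in `ρ` and vanishes exactly at `ρ = ρ*`. -/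
theorem stmt_10 :
    (∀ ρ : ℝ, fmap ρ xminus - xminus = ((261 + 11 * Real.sqrt 33) / 288) * (ρ - ρstar)) ∧
    0 < (261 + 11 * Real.sqrt 33) / 288 ∧
    StrictMonoOn (fun ρ : ℝ => (fmap ρ xminus - xminus) / Real.sqrt 2) (Set.Ici ρstar) ∧
    (∀ ρ : ℝ, ρstar ≤ ρ →
      ((fmap ρ xminus - xminus) / Real.sqrt 2 = 0 ↔ ρ = ρstar)) := by
  have h2 : (0:ℝ) < Real.sqrt 2 := Real.sqrt_pos.mpr (by norm_num)
  refine ⟨key, slope_pos, ?_, ?_⟩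
  · intro a _ b _ hab
    simp only [key a, key b]
    have := slope_pos
    have hc : (0:ℝ) < (261 + 11 * Real.sqrt 33) / 288 / Real.sqrt 2 :=
      div_pos slope_pos h2
    calc (261 + 11 * Real.sqrt 33) / 288 * (a - ρstar) / Real.sqrt 2
        = (261 + 11 * Real.sqrt 33) / 288 / Real.sqrt 2 * (a - ρstar) := by ring
      _ < (261 + 11 * Real.sqrt 33) / 288 / Real.sqrt 2 * (b - ρstar) := by
          apply mul_lt_mul_of_pos_left (by linarith) hc
      _ = (261 + 11 * Real.sqrt 33) / 288 * (b - ρstar) / Real.sqrt 2 := by ring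
  · intro ρ _
    rw [key ρ, div_eq_zero_iff, mul_eq_zero]
    constructor
    · rintro (h | h)
      · rcases h with h | h
        · exact absurd h slope_pos.ne'
        · linarith [sub_eq_zero.mp h]
      · exact absurd h h2.ne'
    · intro h
      left; right; rw [h]; ring
end
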